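/- Let 0 < q < 1 and α > 0 be real, w complex with |w| < 1, d an odd positive integer, χ : ℤ → ℂ with period d, and s complex. Define L(s | χ) := (1+q) Σ_{m=1}^∞ (-1)^m χ(m) w^m [m]_{q^α}^{-s} and ζ̃_{q^d}^{(α, w^d)}(s, y) := (1+q^d) Σ_{m=0}^∞ (-1)^m w^{dm} [m+y]_{q^{dα}}^{-s}. Then L(s | χ) = ((1+q)/(1+q^d)) · [d]_{q^α}^{-s} · Σ_{a=0}^{d-1} (-1)^a χ(a) w^a · ζ̃_{q^d}^{(α, w^d)}(s, a/d), where the a = 0 term of the Hurwitz zeta omits m = 0. -/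

import Mathlib

/-- The weighted q-bracket `[y]_{q^α} = (1 - q^{αy})/(1 - q^α)`. -/
noncomputable def qbr (q α y : ℝ) : ℝ := (1 - q ^ (α * y)) / (1 - q ^ α)

/-- The twisted q-Hurwitz zeta function
`ζ̃_{q^d}^{(α,w^d)}(s,y) = (1+q^d) Σ_{m≥0} (-1)^m w^{dm} [m+y]_{q^{dα}}^{-s}`,
where for `a = 0` (i.e. `y = 0`) the `m = 0` term is omitted. -/
noncomputable def ZetaTw (q α : ℝ) (d : ℕ) (w : ℂ) (s : ℂ) (y : ℝ) : ℂ :=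
  (1 + (q : ℂ) ^ d) *
    ∑' m : ℕ, (-1 : ℂ) ^ m * w ^ (d * m) * ((qbr q ((d : ℝ) * α) ((m : ℝ) + y) : ℝ) : ℂ) ^ (-s)

/-!
Split the series for `L(s | χ)` over the residue classes `n = kd + a`, `0 ≤ a < d`. Because `χ`
has period `d`, `d` is odd and `[kd + a]_{q^α} = [d]_{q^α} [k + a/d]_{q^{dα}}`, the class of `a`
contributes `(-1)^a χ(a) w^a [d]_{q^α}^{-s}` times the twisted Hurwitz series at `a/d`. The
rearrangement is justified by absolute convergence: `χ` is bounded, `[n]_{q^α} ∈ [1, (1-q^α)⁻¹]`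
for `n ≥ 1`, and `|w| < 1`.
-/

open Finset Function

lemma tsum_eq_sum_range_tsum_mul_add {R : Type*} [AddCommGroup R] [UniformSpace R]
    [IsUniformAddGroup R] [CompleteSpace R] [T0Space R] {f : ℕ → R} (hf : Summable f)
    {d : ℕ} (hd : 0 < d) :
    ∑' n, f n = ∑ a ∈ range d, ∑' k, f (k * d + a) := by
  obtain ⟨n, rfl⟩ := Nat.exists_eq_add_of_lt hd
  rw [Nat.sumByResidueClasses hf (0 + n + 1), ← Fin.sum_univ_eq_sum_range]
  exact Fintype.sum_congr _ _ fun j => tsum_congr fun k => by rw [add_comm, mul_comm]; rfl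

lemma norm_le_sum_range_of_periodic {E : Type*} [SeminormedAddCommGroup E] {χ : ℤ → E} {d : ℕ}
    (hχ : Periodic χ d) (hd : 0 < d) (n : ℕ) : ‖χ n‖ ≤ ∑ a ∈ range d, ‖χ a‖ := by
  have hper : Periodic (fun n : ℕ => χ n) d := fun n => by simpa using hχ n
  rw [← hper.map_mod_nat n]
  exact single_le_sum (f := fun a : ℕ => ‖χ a‖) (fun _ _ => norm_nonneg _)
    (mem_range.mpr (Nat.mod_lt n hd))

lemma Complex.norm_ofReal_cpow_le {x B : ℝ} (hx : 1 ≤ x) (hxB : x ≤ B) (s : ℂ) :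
    ‖(x : ℂ) ^ s‖ ≤ B ^ |s.re| := by
  rw [Complex.norm_cpow_eq_rpow_re_of_pos (by linarith)]
  calc x ^ s.re ≤ x ^ |s.re| := Real.rpow_le_rpow_of_exponent_le hx (le_abs_self _)
    _ ≤ B ^ |s.re| := Real.rpow_le_rpow (by linarith) hxB (abs_nonneg _)

section QBracket

variable {q β : ℝ}

lemma qbr_mul {c : ℝ} (h : q ^ (c * β) ≠ 1) (u : ℝ) :
    qbr q β (c * u) = qbr q β c * qbr q (c * β) u := by
  have h' : 1 - q ^ (c * β) ≠ 0 := sub_ne_zero.mpr h.symm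
  unfold qbr
  rw [← mul_assoc, mul_comm β c, div_mul_div_comm, mul_comm (1 - q ^ (c * β)),
    mul_div_mul_right _ _ h']

variable (hq0 : 0 < q) (hq1 : q < 1) (hβ : 0 < β)
include hq0 hq1 hβ

lemma qbr_nonneg {y : ℝ} (hy : 0 ≤ y) : 0 ≤ qbr q β y :=
  div_nonneg (sub_nonneg.mpr (Real.rpow_le_one hq0.le hq1.le (by positivity)))
    (sub_pos.mpr (Real.rpow_lt_one hq0.le hq1 hβ)).le

lemma one_le_qbr {y : ℝ} (hy : 1 ≤ y) : 1 ≤ qbr q β y := by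
  have hle : q ^ (β * y) ≤ q ^ β :=
    Real.rpow_le_rpow_of_exponent_ge hq0 hq1.le (le_mul_of_one_le_right hβ.le hy)
  rw [qbr, le_div_iff₀ (sub_pos.mpr (Real.rpow_lt_one hq0.le hq1 hβ))]
  linarith

lemma qbr_le_inv (y : ℝ) : qbr q β y ≤ (1 - q ^ β)⁻¹ := by
  have hpos := sub_pos.mpr (Real.rpow_lt_one hq0.le hq1 hβ)
  rw [qbr, div_le_iff₀ hpos, inv_mul_cancel₀ hpos.ne']
  linarith [Real.rpow_nonneg hq0.le (β * y)]

end QBracket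

/-- Also defined at `n = 0`, where `[0]_{q^α}^{-s}` is a junk value; it cancels out of the
decomposition. -/
noncomputable def twistedEulerTerm (q α : ℝ) (χ : ℤ → ℂ) (w s : ℂ) (n : ℕ) : ℂ :=
  (-1) ^ n * χ n * w ^ n * ((qbr q α n : ℝ) : ℂ) ^ (-s)

noncomputable def twistedHurwitzTerm (q α : ℝ) (d : ℕ) (w s : ℂ) (y : ℝ) (m : ℕ) : ℂ :=
  (-1) ^ m * w ^ (d * m) * ((qbr q ((d : ℝ) * α) ((m : ℝ) + y) : ℝ) : ℂ) ^ (-s)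

lemma ZetaTw_eq_tsum_twistedHurwitzTerm (q α : ℝ) (d : ℕ) (w s : ℂ) (y : ℝ) :
    ZetaTw q α d w s y = (1 + (q : ℂ) ^ d) * ∑' m, twistedHurwitzTerm q α d w s y m :=
  rfl

section TwistedEulerTerm

variable {q α : ℝ} {χ : ℤ → ℂ} {w : ℂ} {d : ℕ}
variable (hq0 : 0 < q) (hq1 : q < 1) (hα : 0 < α)
include hq0 hq1 hα

lemma summable_twistedEulerTerm (hw : ‖w‖ < 1) (hχ : Periodic χ d) (hd : 0 < d) (s : ℂ) :
    Summable (twistedEulerTerm q α χ w s) := by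
  set C := ∑ a ∈ range d, ‖χ a‖
  set B := (1 - q ^ α)⁻¹ ^ |(-s).re|
  rw [← summable_nat_add_iff 1]
  refine Summable.of_norm_bounded
    ((summable_geometric_of_lt_one (norm_nonneg w) hw).mul_left (C * B)) fun n => ?_
  have hn : (1 : ℝ) ≤ ((n + 1 : ℕ) : ℝ) := by simp
  calc ‖twistedEulerTerm q α χ w s (n + 1)‖
      = ‖χ (n + 1 : ℕ)‖ * ‖w‖ ^ (n + 1) * ‖((qbr q α (n + 1 : ℕ) : ℝ) : ℂ) ^ (-s)‖ := by
        simp [twistedEulerTerm]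
    _ ≤ C * ‖w‖ ^ n * B := by
        gcongr ?_ * ?_ * ?_
        · exact norm_le_sum_range_of_periodic hχ hd _
        · exact pow_le_pow_of_le_one (norm_nonneg w) hw.le n.le_succ
        · exact Complex.norm_ofReal_cpow_le (one_le_qbr hq0 hq1 hα hn)
            (qbr_le_inv hq0 hq1 hα _) _
    _ = C * B * ‖w‖ ^ n := by ring

/-- `[kd + a]_{q^α} = [d]_{q^α} [k + a/d]_{q^{dα}}`; the signs split because `d` is odd. -/
lemma twistedEulerTerm_mul_add (hd : Odd d) (hχ : Periodic χ d) (s : ℂ) (k a : ℕ) :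
    twistedEulerTerm q α χ w s (k * d + a)
      = (-1) ^ a * χ a * w ^ a * ((qbr q α d : ℝ) : ℂ) ^ (-s) *
          twistedHurwitzTerm q α d w s ((a : ℝ) / d) k := by
  have hdR : (0 : ℝ) < d := by exact_mod_cast hd.pos
  have hy : (0 : ℝ) ≤ (k : ℝ) + (a : ℝ) / d := by positivity
  have hqbr : qbr q α ((k * d + a : ℕ) : ℝ)
      = qbr q α d * qbr q ((d : ℝ) * α) ((k : ℝ) + (a : ℝ) / d) := by
    rw [← qbr_mul (Real.rpow_lt_one hq0.le hq1 (by positivity)).ne]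
    congr 1
    push_cast
    field_simp
  have hχa : χ ((k * d + a : ℕ) : ℤ) = χ a := by
    simpa [add_comm] using hχ.nat_mul k a
  rw [twistedEulerTerm, twistedHurwitzTerm, hqbr, Complex.ofReal_mul,
    Complex.mul_cpow_ofReal_nonneg (qbr_nonneg hq0 hq1 hα hdR.le)
      (qbr_nonneg hq0 hq1 (by positivity) hy),
    hχa, pow_add, pow_mul', hd.neg_one_pow, pow_add, pow_mul]
  ring

lemma tsum_twistedEulerTerm_mul_add (hd : Odd d) (hχ : Periodic χ d) (s : ℂ) (a : ℕ) :
    ∑' k, twistedEulerTerm q α χ w s (k * d + a)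
      = (-1) ^ a * χ a * w ^ a * ((qbr q α d : ℝ) : ℂ) ^ (-s) *
          ∑' k, twistedHurwitzTerm q α d w s ((a : ℝ) / d) k := by
  simp only [twistedEulerTerm_mul_add hq0 hq1 hα hd hχ, tsum_mul_left]

lemma tsum_twistedEulerTerm_mul (hw : ‖w‖ < 1) (hd : Odd d) (hχ : Periodic χ d) (s : ℂ) :
    ∑' k, twistedEulerTerm q α χ w s (k * d)
      = twistedEulerTerm q α χ w s 0 + χ 0 * ((qbr q α d : ℝ) : ℂ) ^ (-s) *
          ∑' m, twistedHurwitzTerm q α d w s 0 (m + 1) := by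
  have hs : Summable fun k => twistedEulerTerm q α χ w s (k * d) :=
    (summable_twistedEulerTerm hq0 hq1 hα hw hχ hd.pos s).comp_injective
      (mul_left_injective₀ hd.pos.ne')
  rw [hs.tsum_eq_zero_add, zero_mul, ← tsum_mul_left]
  congr 1
  refine tsum_congr fun m => ?_
  simpa using twistedEulerTerm_mul_add hq0 hq1 hα hd hχ s (m + 1) 0

lemma tsum_twistedEulerTerm_succ (hw : ‖w‖ < 1) (hd : Odd d) (hχ : Periodic χ d) (s : ℂ) :
    ∑' n, twistedEulerTerm q α χ w s (n + 1)
      = ((qbr q α d : ℝ) : ℂ) ^ (-s) *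
          (χ 0 * ∑' m, twistedHurwitzTerm q α d w s 0 (m + 1) +
            ∑ a ∈ Ico 1 d, (-1) ^ a * χ a * w ^ a *
              ∑' k, twistedHurwitzTerm q α d w s ((a : ℝ) / d) k) := by
  have hT := summable_twistedEulerTerm hq0 hq1 hα hw hχ hd.pos s
  have hsplit := tsum_eq_sum_range_tsum_mul_add hT hd.pos
  rw [hT.tsum_eq_zero_add, range_eq_Ico, sum_eq_sum_Ico_succ_bot hd.pos] at hsplit
  simp only [add_zero, zero_add] at hsplit
  rw [tsum_twistedEulerTerm_mul hq0 hq1 hα hw hd hχ, add_assoc] at hsplit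
  rw [add_left_cancel hsplit, mul_add, mul_sum, ← mul_assoc, mul_comm _ (χ 0)]
  congr 1
  exact sum_congr rfl fun a _ => by rw [tsum_twistedEulerTerm_mul_add hq0 hq1 hα hd hχ]; ring

end TwistedEulerTerm

theorem twisted_qEuler_L_decomposition_general (q α : ℝ) (hq0 : 0 < q) (hq1 : q < 1) (hα : 0 < α)
    (w : ℂ) (hw : ‖w‖ < 1) (d : ℕ) (hd : Odd d)
    (χ : ℤ → ℂ) (hχ : ∀ j : ℤ, χ (j + d) = χ j) (s : ℂ) :
    (1 + (q : ℂ)) *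
        ∑' m : ℕ, (-1 : ℂ) ^ (m + 1) * χ (m + 1) * w ^ (m + 1) *
          ((qbr q α ((m : ℝ) + 1) : ℝ) : ℂ) ^ (-s)
      = ((1 + (q : ℂ)) / (1 + (q : ℂ) ^ d)) * ((qbr q α d : ℝ) : ℂ) ^ (-s) *
          (χ 0 *
              ((1 + (q : ℂ) ^ d) *
                ∑' m : ℕ, (-1 : ℂ) ^ (m + 1) * w ^ (d * (m + 1)) *
                  ((qbr q ((d : ℝ) * α) ((m : ℝ) + 1) : ℝ) : ℂ) ^ (-s))
            + ∑ a ∈ Finset.Ico 1 d,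
                (-1 : ℂ) ^ a * χ a * w ^ a * ZetaTw q α d w s ((a : ℝ) / d)) := by
  have hL : ∑' m : ℕ, (-1 : ℂ) ^ (m + 1) * χ (m + 1) * w ^ (m + 1) *
      ((qbr q α ((m : ℝ) + 1) : ℝ) : ℂ) ^ (-s) = ∑' m, twistedEulerTerm q α χ w s (m + 1) := by
    simp [twistedEulerTerm]
  have hZ0 : ∑' m : ℕ, (-1 : ℂ) ^ (m + 1) * w ^ (d * (m + 1)) *
      ((qbr q ((d : ℝ) * α) ((m : ℝ) + 1) : ℝ) : ℂ) ^ (-s)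
        = ∑' m, twistedHurwitzTerm q α d w s 0 (m + 1) := by
    simp [twistedHurwitzTerm]
  have hqd : (1 : ℂ) + (q : ℂ) ^ d ≠ 0 := by
    exact_mod_cast (by positivity : (0 : ℝ) < 1 + q ^ d).ne'
  rw [hL, hZ0, tsum_twistedEulerTerm_succ hq0 hq1 hα hw hd hχ]
  simp only [ZetaTw_eq_tsum_twistedHurwitzTerm, mul_left_comm _ (1 + (q : ℂ) ^ d), ← mul_sum]
  field_simp

/-- `L(s|χ) = ((1+q)/(1+q^d)) [d]_{q^α}^{-s} Σ_{a<d} (-1)^a χ(a) w^a ζ̃_{q^d}^{(α,w^d)}(s, a/d)`,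
the `a = 0` Hurwitz-zeta term omitting `m = 0`. -/
theorem twisted_qEuler_L_decomposition (q α : ℝ) (hq0 : 0 < q) (hq1 : q < 1) (hα : 0 < α)
    (w : ℂ) (hw : ‖w‖ < 1) (d : ℕ) (hd : Odd d) (hd0 : 0 < d)
    (χ : ℤ → ℂ) (hχ : ∀ j : ℤ, χ (j + d) = χ j) (s : ℂ) :
    (1 + (q : ℂ)) *
        ∑' m : ℕ, (-1 : ℂ) ^ (m + 1) * χ (m + 1) * w ^ (m + 1) *
          ((qbr q α ((m : ℝ) + 1) : ℝ) : ℂ) ^ (-s)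
      = ((1 + (q : ℂ)) / (1 + (q : ℂ) ^ d)) * ((qbr q α d : ℝ) : ℂ) ^ (-s) *
          (χ 0 *
              ((1 + (q : ℂ) ^ d) *
                ∑' m : ℕ, (-1 : ℂ) ^ (m + 1) * w ^ (d * (m + 1)) *
                  ((qbr q ((d : ℝ) * α) ((m : ℝ) + 1) : ℝ) : ℂ) ^ (-s))
            + ∑ a ∈ Finset.Ico 1 d,
                (-1 : ℂ) ^ a * χ a * w ^ a * ZetaTw q α d w s ((a : ℝ) / d)) :=
  twisted_qEuler_L_decomposition_general q α hq0 hq1 hα w hw d hd χ hχ s
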